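/- Suppose f₀ : ℝⁿ → ℝⁿ and h₀ : ℝⁿ → ℝᵐ (i.e. p = m) are twice continuously differentiable, 𝕌 ⊂ ℝᵐ is compact, 𝕌ˢ ⊆ int(𝕌) is convex and compact, and assumptions (A2), (A4), (A5) hold: there exist σ_s, σ̲ > 0 with σ_min([A_x̃ − I, B; C_x̃, D]) ≥ σ_s and σ_min(I − A_x̃) ≥ σ̲ for all x̃ ∈ ℝⁿ, and there exists a compact set ℬ ⊂ ℝⁿ×ℝᵐ with 𝒵ˢ_lin(x̃) ⊆ ℬ for all x̃ ∈ ℝⁿ. Then for every compact set X ⊂ ℝⁿ with ℬ ⊆ X×𝕌 there exists c_{s,1} > 0 such that for every nonlinear steady state (xˢ,uˢ) ∈ 𝒵ˢ (that is, uˢ ∈ 𝕌ˢ and xˢ = f(xˢ,uˢ)), every x̃ ∈ X, and every ũ ∈ 𝕌: ‖(xˢ,uˢ) − (x̃,ũ)‖₂ ≤ c_{s,1}·(‖h(xˢ,uˢ) − h(x̃,ũ)‖₂ + ‖x̃ − f(x̃,ũ)‖₂). -/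

import Mathlib

open Matrix

noncomputable section

def en {k : ℕ} (x : Fin k → ℝ) : ℝ := Real.sqrt (∑ i, x i ^ 2)

def qn {k : ℕ} (P : Matrix (Fin k) (Fin k) ℝ) (x : Fin k → ℝ) : ℝ :=
  x ⬝ᵥ P.mulVec x

def jac {n q : ℕ} (g : (Fin n → ℝ) → Fin q → ℝ) (xt : Fin n → ℝ) :
    Matrix (Fin q) (Fin n) ℝ :=
  LinearMap.toMatrix' (fderiv ℝ g xt).toLinearMap

def fdyn {n m : ℕ} (f0 : (Fin n → ℝ) → Fin n → ℝ) (B : Matrix (Fin n) (Fin m) ℝ)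
    (x : Fin n → ℝ) (u : Fin m → ℝ) : Fin n → ℝ :=
  f0 x + B.mulVec u

def hout {n p m : ℕ} (h0 : (Fin n → ℝ) → Fin p → ℝ) (D : Matrix (Fin p) (Fin m) ℝ)
    (x : Fin n → ℝ) (u : Fin m → ℝ) : Fin p → ℝ :=
  h0 x + D.mulVec u

def flin {n m : ℕ} (f0 : (Fin n → ℝ) → Fin n → ℝ) (B : Matrix (Fin n) (Fin m) ℝ)
    (xt x : Fin n → ℝ) (u : Fin m → ℝ) : Fin n → ℝ :=
  (jac f0 xt).mulVec x + B.mulVec u + (f0 xt - (jac f0 xt).mulVec xt)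

def hlin {n p m : ℕ} (h0 : (Fin n → ℝ) → Fin p → ℝ) (D : Matrix (Fin p) (Fin m) ℝ)
    (xt x : Fin n → ℝ) (u : Fin m → ℝ) : Fin p → ℝ :=
  (jac h0 xt).mulVec x + D.mulVec u + (h0 xt - (jac h0 xt).mulVec xt)

def Zlin {n m : ℕ} (f0 : (Fin n → ℝ) → Fin n → ℝ) (B : Matrix (Fin n) (Fin m) ℝ)
    (Us : Set (Fin m → ℝ)) (xt : Fin n → ℝ) : Set ((Fin n → ℝ) × (Fin m → ℝ)) :=
  {z | z.2 ∈ Us ∧ z.1 = flin f0 B xt z.1 z.2}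

def Zs {n m : ℕ} (f0 : (Fin n → ℝ) → Fin n → ℝ) (B : Matrix (Fin n) (Fin m) ℝ)
    (Us : Set (Fin m → ℝ)) : Set ((Fin n → ℝ) × (Fin m → ℝ)) :=
  {z | z.2 ∈ Us ∧ z.1 = fdyn f0 B z.1 z.2}

def A2holds {n m p : ℕ} (f0 : (Fin n → ℝ) → Fin n → ℝ) (h0 : (Fin n → ℝ) → Fin p → ℝ)
    (B : Matrix (Fin n) (Fin m) ℝ) (D : Matrix (Fin p) (Fin m) ℝ) (σs : ℝ) : Prop :=
  ∀ (xt v : Fin n → ℝ) (w : Fin m → ℝ),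
    σs * Real.sqrt (en v ^ 2 + en w ^ 2) ≤
      Real.sqrt (en ((jac f0 xt).mulVec v - v + B.mulVec w) ^ 2 +
        en ((jac h0 xt).mulVec v + D.mulVec w) ^ 2)

def A3holds {n m : ℕ} (f0 : (Fin n → ℝ) → Fin n → ℝ) (B : Matrix (Fin n) (Fin m) ℝ)
    (μ : ℝ) : Prop :=
  ∀ (xt w : Fin n → ℝ),
    μ * en w ≤ Real.sqrt (∑ k ∈ Finset.range n, en ((jac f0 xt ^ k * B)ᵀ.mulVec w) ^ 2)

def A4holds {n : ℕ} (f0 : (Fin n → ℝ) → Fin n → ℝ) (σl : ℝ) : Prop :=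
  ∀ xt v : Fin n → ℝ, σl * en v ≤ en (v - (jac f0 xt).mulVec v)


open Metric Set

section Aux

lemma lipIcc {E : Type*} [NormedAddCommGroup E] {z : ℝ → E} {I : Set ℝ} {L : ℝ}
    (h : ∀ t ∈ I, ∀ t' ∈ I, t ≤ t' → ‖z t - z t'‖ ≤ L * (t' - t)) :
    ∀ t ∈ I, ∀ t' ∈ I, ‖z t - z t'‖ ≤ L * |t - t'| := by
  intro t ht t' ht'
  rcases le_total t t' with H | H
  · rw [abs_of_nonpos (by linarith)]
    have := h t ht t' ht' H
    simpa [neg_sub] using this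
  · rw [abs_of_nonneg (by linarith), norm_sub_rev]
    exact h t' ht' t ht H

set_option maxHeartbeats 1600000 in
/-- Hadamard–Lévy type global injectivity: a `C¹` self-map of a finite-dimensional
real normed space whose derivative is uniformly bounded below is injective. -/
theorem key_inj {E : Type*} [NormedAddCommGroup E] [NormedSpace ℝ E] [FiniteDimensional ℝ E]
    (φ : E → E) (hφ : ContDiff ℝ 1 φ) (σ : ℝ) (hσ : 0 < σ)
    (hlow : ∀ z ξ, σ * ‖ξ‖ ≤ ‖fderiv ℝ φ z ξ‖) : Function.Injective φ := by
  have hdiff : Differentiable ℝ φ := hφ.differentiable one_ne_zero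
  have hDc : Continuous (fderiv ℝ φ) := hφ.continuous_fderiv one_ne_zero
  have hDinj : ∀ p : E, Function.Injective (fderiv ℝ φ p) := by
    intro p x y hxy
    have h1 := hlow p (x - y)
    rw [map_sub, hxy, sub_self, norm_zero] at h1
    have h2 : ‖x - y‖ ≤ 0 := by nlinarith [norm_nonneg (x - y)]
    have h3 := le_antisymm h2 (norm_nonneg _)
    rwa [norm_eq_zero, sub_eq_zero] at h3
  have hDbij : ∀ p : E, Function.Bijective ((fderiv ℝ φ p : E →ₗ[ℝ] E)) := fun p =>
    ⟨hDinj p, LinearMap.injective_iff_surjective.mp (hDinj p)⟩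
  let Dφe : E → (E ≃L[ℝ] E) := fun p =>
    (LinearEquiv.ofBijective _ (hDbij p)).toContinuousLinearEquiv
  have hDφe : ∀ p v, Dφe p v = fderiv ℝ φ p v := fun p v => rfl
  have hsymm : ∀ p y, ‖(Dφe p).symm y‖ ≤ σ⁻¹ * ‖y‖ := by
    intro p y
    have h1 := hlow p ((Dφe p).symm y)
    rw [← hDφe p ((Dφe p).symm y), (Dφe p).apply_symm_apply] at h1
    have h2 : σ⁻¹ * (σ * ‖(Dφe p).symm y‖) ≤ σ⁻¹ * ‖y‖ :=
      mul_le_mul_of_nonneg_left h1 (by positivity)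
    rwa [← mul_assoc, inv_mul_cancel₀ hσ.ne', one_mul] at h2
  intro a b hab
  -- Lipschitz data for the path
  obtain ⟨M, hM⟩ := (isCompact_closedBall a (‖b - a‖ + 1)).exists_bound_of_continuousOn
    hDc.continuousOn
  have hM0 : 0 ≤ M := le_trans (norm_nonneg _) (hM a (mem_closedBall_self (by positivity)))
  have hφlip : ∀ x ∈ closedBall a (‖b - a‖ + 1), ∀ y ∈ closedBall a (‖b - a‖ + 1),
      ‖φ x - φ y‖ ≤ M * ‖x - y‖ := by
    intro x hx y hy
    exact Convex.norm_image_sub_le_of_norm_fderiv_le (fun z _ => hdiff z)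
      hM (convex_closedBall _ _) hy hx
  set p : ℝ → E := fun t => φ (a + t • (b - a)) with hp
  have hpt : ∀ t ∈ Icc (0:ℝ) 1, a + t • (b - a) ∈ closedBall a (‖b - a‖ + 1) := by
    intro t ht
    rw [mem_closedBall_iff_norm]
    have : a + t • (b - a) - a = t • (b - a) := by abel
    rw [this, norm_smul, Real.norm_eq_abs, abs_of_nonneg ht.1]
    nlinarith [norm_nonneg (b - a), ht.2]
  have hplip : ∀ t ∈ Icc (0:ℝ) 1, ∀ t' ∈ Icc (0:ℝ) 1,
      ‖p t - p t'‖ ≤ (M * ‖b - a‖) * |t - t'| := by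
    intro t ht t' ht'
    calc ‖p t - p t'‖ ≤ M * ‖(a + t • (b - a)) - (a + t' • (b - a))‖ :=
          hφlip _ (hpt t ht) _ (hpt t' ht')
      _ = (M * ‖b - a‖) * |t - t'| := by
          rw [show (a + t • (b - a)) - (a + t' • (b - a)) = (t - t') • (b - a) by
            rw [sub_smul]; abel]
          rw [norm_smul, Real.norm_eq_abs]; ring
  set CH : ℝ := M * ‖b - a‖ + 1 with hCH
  have hCH1 : 1 ≤ CH := by nlinarith [norm_nonneg (b - a)]
  have hCH0 : 0 < CH := by linarith
  set H : ℝ → ℝ → E := fun s t => (1 - s) • p t + s • φ a with hHdef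
  have hp0 : p 0 = φ a := by simp [hp]
  have hp1 : p 1 = φ a := by simp [hp, hab]
  have hHs0 : ∀ s, H s 0 = φ a := by
    intro s; rw [hHdef]; simp only [hp0, ← add_smul, sub_add_cancel, one_smul]
  have hHs1 : ∀ s, H s 1 = φ a := by
    intro s; rw [hHdef]; simp only [hp1, ← add_smul, sub_add_cancel, one_smul]
  have hHt : ∀ s ∈ Icc (0:ℝ) 1, ∀ t ∈ Icc (0:ℝ) 1, ∀ t' ∈ Icc (0:ℝ) 1,
      ‖H s t - H s t'‖ ≤ CH * |t - t'| := by
    intro s hs t ht t' ht'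
    have h1 : H s t - H s t' = (1 - s) • (p t - p t') := by
      rw [hHdef]; module
    rw [h1, norm_smul, Real.norm_eq_abs, abs_of_nonneg (by linarith [hs.2])]
    calc (1 - s) * ‖p t - p t'‖ ≤ 1 * ((M * ‖b - a‖) * |t - t'|) := by
          apply mul_le_mul (by linarith [hs.1]) (hplip t ht t' ht') (norm_nonneg _) one_pos.le
      _ ≤ CH * |t - t'| := by
          rw [one_mul]
          apply mul_le_mul_of_nonneg_right (by linarith) (abs_nonneg _)
  have hHs : ∀ s s' : ℝ, ∀ t ∈ Icc (0:ℝ) 1, ‖H s t - H s' t‖ ≤ CH * |s - s'| := by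
    intro s s' t ht
    have h1 : H s t - H s' t = (s - s') • (φ a - p t) := by
      rw [hHdef]; module
    rw [h1, norm_smul, Real.norm_eq_abs]
    have h2 : ‖φ a - p t‖ ≤ M * ‖b - a‖ := by
      rw [← hp0, norm_sub_rev]
      calc ‖p t - p 0‖ ≤ (M * ‖b - a‖) * |t - 0| := hplip t ht 0 ⟨le_rfl, zero_le_one⟩
        _ ≤ (M * ‖b - a‖) * 1 := by
            apply mul_le_mul_of_nonneg_left _ (by positivity)
            rw [sub_zero, abs_of_nonneg ht.1]; exact ht.2
        _ = M * ‖b - a‖ := mul_one _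
    calc |s - s'| * ‖φ a - p t‖ ≤ |s - s'| * CH :=
          mul_le_mul_of_nonneg_left (by linarith) (abs_nonneg _)
      _ = CH * |s - s'| := mul_comm _ _
  set L : ℝ := 2 * CH / σ with hLdef
  have hL0 : 0 < L := by positivity
  -- uniform quantitative approximation radius
  obtain ⟨ρ, hρ0, hρ1, happrox⟩ :
      ∃ ρ : ℝ, 0 < ρ ∧ ρ ≤ 1 ∧ ∀ p₀ ∈ closedBall a (L + 1), ∀ x ∈ closedBall p₀ ρ,
        ∀ y ∈ closedBall p₀ ρ, ‖φ x - φ y - fderiv ℝ φ p₀ (x - y)‖ ≤ σ / 2 * ‖x - y‖ := by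
    have hKc : IsCompact (closedBall a (L + 4)) := isCompact_closedBall _ _
    have huc := hKc.uniformContinuousOn_of_continuous hDc.continuousOn
    rw [uniformContinuousOn_iff] at huc
    obtain ⟨δ, hδ0, hδ⟩ := huc (σ / 2) (by positivity)
    refine ⟨min (δ / 3) 1, by positivity, min_le_right _ _, ?_⟩
    intro p₀ hp₀ x hx y hy
    set ρ := min (δ / 3) 1 with hρdef
    have hρδ : ρ ≤ δ / 3 := min_le_left _ _
    have hρ1' : ρ ≤ 1 := min_le_right _ _
    have hρpos : 0 < ρ := by positivity
    have hsub : Metric.ball p₀ (2 * ρ) ⊆ closedBall a (L + 4) := by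
      intro w hw
      rw [mem_ball] at hw; rw [mem_closedBall] at hp₀ ⊢
      calc dist w a ≤ dist w p₀ + dist p₀ a := dist_triangle _ _ _
        _ ≤ 2 * ρ + (L + 1) := by linarith
        _ ≤ L + 4 := by linarith
    have hbound : ∀ w ∈ Metric.ball p₀ (2 * ρ),
        ‖fderiv ℝ (fun x => φ x - fderiv ℝ φ p₀ x) w‖ ≤ σ / 2 := by
      intro w hw
      have hfd : fderiv ℝ (fun x => φ x - fderiv ℝ φ p₀ x) w
          = fderiv ℝ φ w - fderiv ℝ φ p₀ := by
        rw [fderiv_fun_sub (hdiff w) ((fderiv ℝ φ p₀).differentiableAt),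
          ContinuousLinearMap.fderiv]
      rw [hfd]
      have h1 : dist (fderiv ℝ φ w) (fderiv ℝ φ p₀) < σ / 2 := by
        apply hδ w (hsub hw) p₀ (hsub (mem_ball_self (by positivity)))
        rw [mem_ball] at hw
        calc dist w p₀ < 2 * ρ := hw
          _ ≤ 2 * (δ / 3) := by linarith
          _ < δ := by linarith
      rw [dist_eq_norm] at h1; linarith
    have hmvt := Convex.norm_image_sub_le_of_norm_fderiv_le
      (f := fun x => φ x - fderiv ℝ φ p₀ x) (s := Metric.ball p₀ (2 * ρ))
      (fun w _ => (hdiff w).sub ((fderiv ℝ φ p₀).differentiableAt))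
      hbound (convex_ball _ _)
      (show y ∈ Metric.ball p₀ (2 * ρ) by
        rw [mem_ball]; rw [mem_closedBall] at hy; linarith)
      (show x ∈ Metric.ball p₀ (2 * ρ) by
        rw [mem_ball]; rw [mem_closedBall] at hx; linarith)
    have heq : φ x - fderiv ℝ φ p₀ x - (φ y - fderiv ℝ φ p₀ y)
        = φ x - φ y - fderiv ℝ φ p₀ (x - y) := by
      rw [map_sub]; abel
    rwa [heq] at hmvt
  have antilip : ∀ p₀ ∈ closedBall a (L + 1), ∀ x ∈ closedBall p₀ ρ, ∀ y ∈ closedBall p₀ ρ,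
      σ / 2 * ‖x - y‖ ≤ ‖φ x - φ y‖ := by
    intro p₀ hp₀ x hx y hy
    have h1 := hlow p₀ (x - y)
    have h2 := happrox p₀ hp₀ x hx y hy
    have h3 : ‖fderiv ℝ φ p₀ (x - y)‖ ≤ ‖φ x - φ y‖ + σ / 2 * ‖x - y‖ := by
      calc ‖fderiv ℝ φ p₀ (x - y)‖
          = ‖(φ x - φ y) - (φ x - φ y - fderiv ℝ φ p₀ (x - y))‖ := by congr 1; abel
        _ ≤ ‖φ x - φ y‖ + ‖φ x - φ y - fderiv ℝ φ p₀ (x - y)‖ := norm_sub_le _ _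
        _ ≤ ‖φ x - φ y‖ + σ / 2 * ‖x - y‖ := by linarith
    linarith
  -- quantitative local surjectivity with chosen inverse function
  have surj : ∀ p₀ ∈ closedBall a (L + 1), ∃ w : E → E,
      ∀ y ∈ closedBall (φ p₀) (σ / 2 * ρ), w y ∈ closedBall p₀ ρ ∧ φ (w y) = y := by
    intro p₀ hp₀
    classical
    have happly : ApproximatesLinearOn φ (fderiv ℝ φ p₀) (closedBall p₀ ρ)
        (Real.toNNReal (σ / 2)) := by
      intro x hx y' hy'
      rw [Real.coe_toNNReal _ (by positivity)]
      exact happrox p₀ hp₀ x hx y' hy'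
    set fsymm : ContinuousLinearMap.NonlinearRightInverse (fderiv ℝ φ p₀) :=
      { toFun := fun y => (Dφe p₀).symm y
        nnnorm := Real.toNNReal σ⁻¹
        bound' := fun y => by
          rw [Real.coe_toNNReal _ (by positivity)]; exact hsymm p₀ y
        right_inv' := fun y => by
          rw [← hDφe]; exact (Dφe p₀).apply_symm_apply y } with hfsymm
    have hsurj := happly.surjOn_closedBall_of_nonlinearRightInverse fsymm hρ0.le
      (subset_refl _)
    have hrad : σ / 2 * ρ ≤ ((fsymm.nnnorm : ℝ)⁻¹ - (Real.toNNReal (σ / 2) : ℝ)) * ρ := by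
      have h1 : (fsymm.nnnorm : ℝ) = σ⁻¹ := Real.coe_toNNReal _ (by positivity)
      have h2 : ((Real.toNNReal (σ / 2)) : ℝ) = σ / 2 := Real.coe_toNNReal _ (by positivity)
      rw [h1, h2, inv_inv]
      nlinarith [hρ0.le]
    refine ⟨fun y => if hy : y ∈ closedBall (φ p₀) (σ / 2 * ρ) then
      Classical.choose (hsurj (closedBall_subset_closedBall hrad hy)) else p₀, ?_⟩
    intro y hy
    simp only [dif_pos hy]
    obtain ⟨hmem, heq⟩ := Classical.choose_spec (hsurj (closedBall_subset_closedBall hrad hy))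
    exact ⟨hmem, heq⟩
  -- step size for the finite continuation
  set hstep : ℝ := σ * ρ / (2 * CH) with hhstepdef
  have hhstep0 : 0 < hstep := by positivity
  have hCHhstep : CH * hstep ≤ σ / 2 * ρ := by
    rw [hhstepdef]
    have h1 : CH * (σ * ρ / (2 * CH)) = σ * ρ / 2 := by field_simp
    rw [h1]; linarith
  have hlift : ∀ s ∈ Icc (0:ℝ) 1, ∀ k : ℕ, ∃ z : ℝ → E, z 0 = a ∧
      (∀ t ∈ Icc (0:ℝ) (min ((k:ℝ) * hstep) 1), φ (z t) = H s t) ∧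
      (∀ t ∈ Icc (0:ℝ) (min ((k:ℝ) * hstep) 1), ∀ t' ∈ Icc (0:ℝ) (min ((k:ℝ) * hstep) 1),
        ‖z t - z t'‖ ≤ L * |t - t'|) := by
    intro s hs k
    induction k with
    | zero =>
      have hmin0 : min (((0:ℕ):ℝ) * hstep) 1 = 0 := by
        rw [Nat.cast_zero, zero_mul]; exact min_eq_left zero_le_one
      refine ⟨fun _ => a, rfl, ?_, ?_⟩
      · intro t ht
        rw [hmin0] at ht
        have ht0 : t = 0 := le_antisymm ht.2 ht.1
        subst ht0; rw [hHs0]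
      · intro t ht t' ht'
        rw [hmin0] at ht ht'
        have ht0 : t = 0 := le_antisymm ht.2 ht.1
        have ht0' : t' = 0 := le_antisymm ht'.2 ht'.1
        subst ht0; subst ht0'
        simp only [sub_self, norm_zero, abs_zero, mul_zero, le_refl]
    | succ k ih =>
      obtain ⟨z, hz0, hzφ, hzlip⟩ := ih
      have hcast : ((k+1 : ℕ) : ℝ) = (k : ℝ) + 1 := by push_cast; ring
      by_cases hk : 1 ≤ (k : ℝ) * hstep
      · have heq : min (((k+1 : ℕ):ℝ) * hstep) 1 = min ((k:ℝ) * hstep) 1 := by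
          rw [hcast, min_eq_right hk, min_eq_right (by nlinarith)]
        rw [heq]
        exact ⟨z, hz0, hzφ, hzlip⟩
      · push_neg at hk
        set τ : ℝ := min ((k:ℝ) * hstep) 1 with hτdef
        have hτeq : τ = (k:ℝ) * hstep := min_eq_left hk.le
        set τ' : ℝ := min (((k+1 : ℕ):ℝ) * hstep) 1 with hτ'def
        have hτ'eq : τ' = min ((k:ℝ) * hstep + hstep) 1 := by
          rw [hτ'def, hcast, add_mul, one_mul]
        have hττ' : τ ≤ τ' := by
          rw [hτ'eq, hτdef]
          exact min_le_min (by linarith [hhstep0.le]) le_rfl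
        have hτ'1 : τ' ≤ 1 := min_le_right _ _
        have hτ0 : 0 ≤ τ := le_min (by positivity) zero_le_one
        have hτ1 : τ ≤ 1 := min_le_right _ _
        have hgap : ∀ t, t ≤ τ' → t - τ ≤ hstep := by
          intro t ht
          rw [hτeq]
          have h1 : t ≤ (k:ℝ) * hstep + hstep :=
            le_trans ht (by rw [hτ'eq]; exact min_le_left _ _)
          linarith
        have hτIcc : τ ∈ Icc (0:ℝ) τ := ⟨hτ0, le_rfl⟩
        have hzlipa : ∀ t ∈ Icc (0:ℝ) τ, ‖z t - a‖ ≤ L := by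
          intro t ht
          have h1 := hzlip t ht 0 ⟨le_rfl, hτ0⟩
          rw [hz0] at h1
          have h2 : |t - 0| ≤ 1 := by
            rw [sub_zero, abs_of_nonneg ht.1]; exact le_trans ht.2 hτ1
          nlinarith [hL0.le]
        have hp₀mem : z τ ∈ closedBall a (L + 1) := by
          rw [mem_closedBall_iff_norm]
          linarith [hzlipa τ hτIcc]
        obtain ⟨w, hw⟩ := surj (z τ) hp₀mem
        have hφzτ : φ (z τ) = H s τ := hzφ τ hτIcc
        have hHmem : ∀ t, τ < t → t ≤ τ' → H s t ∈ closedBall (φ (z τ)) (σ / 2 * ρ) := by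
          intro t h1 h2
          rw [mem_closedBall_iff_norm, hφzτ]
          have h3 := hHt s hs t ⟨by linarith, by linarith⟩ τ ⟨hτ0, hτ1⟩
          have h4 : |t - τ| ≤ hstep := by
            rw [abs_of_nonneg (by linarith)]; exact hgap t h2
          calc ‖H s t - H s τ‖ ≤ CH * |t - τ| := h3
            _ ≤ CH * hstep := mul_le_mul_of_nonneg_left h4 hCH0.le
            _ ≤ σ / 2 * ρ := hCHhstep
        classical
        set z' : ℝ → E := fun t => if t ≤ τ then z t else w (H s t) with hz'def
        have hz'eqz : ∀ t, t ≤ τ → z' t = z t := by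
          intro t ht; simp only [hz'def, if_pos ht]
        have hz'w : ∀ t, τ < t → t ≤ τ' → z' t ∈ closedBall (z τ) ρ ∧ φ (z' t) = H s t := by
          intro t h1 h2
          have he : z' t = w (H s t) := by simp only [hz'def, if_neg (not_le.mpr h1)]
          rw [he]
          exact hw (H s t) (hHmem t h1 h2)
        have hz'φ : ∀ t ∈ Icc (0:ℝ) τ', φ (z' t) = H s t := by
          intro t ht
          rcases le_or_gt t τ with h | h
          · rw [hz'eqz t h]; exact hzφ t ⟨ht.1, h⟩
          · exact (hz'w t h ht.2).2
        have hlipb : ∀ t ∈ Icc (0:ℝ) τ', ∀ t' ∈ Icc (0:ℝ) τ', t ≤ t' →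
            ‖z' t - z' t'‖ ≤ L * (t' - t) := by
          intro t ht t' ht' htt'
          rcases le_or_gt t' τ with h | h
          · rw [hz'eqz t (le_trans htt' h), hz'eqz t' h]
            have h1 := hzlip t ⟨ht.1, le_trans htt' h⟩ t' ⟨ht'.1, h⟩
            rwa [abs_of_nonpos (by linarith), neg_sub] at h1
          · rcases le_or_gt t τ with h2 | h2
            · have hb1 : ‖z t - z τ‖ ≤ L * (τ - t) := by
                have h1 := hzlip t ⟨ht.1, h2⟩ τ hτIcc
                rwa [abs_of_nonpos (by linarith), neg_sub] at h1
              have hmem2 := (hz'w t' h ht'.2).1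
              have hb2 := antilip (z τ) hp₀mem (z τ) (mem_closedBall_self hρ0.le) (z' t') hmem2
              rw [hφzτ, (hz'w t' h ht'.2).2] at hb2
              have hb3 := hHt s hs τ ⟨hτ0, hτ1⟩ t' ⟨ht'.1, le_trans ht'.2 hτ'1⟩
              rw [abs_of_nonpos (by linarith), neg_sub] at hb3
              have hb4 : ‖z τ - z' t'‖ ≤ L * (t' - τ) := by
                rw [hLdef]
                have h5 : σ * ‖z τ - z' t'‖ ≤ 2 * CH * (t' - τ) := by nlinarith
                calc ‖z τ - z' t'‖ = σ⁻¹ * (σ * ‖z τ - z' t'‖) := by field_simp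
                  _ ≤ σ⁻¹ * (2 * CH * (t' - τ)) := mul_le_mul_of_nonneg_left h5 (by positivity)
                  _ = 2 * CH / σ * (t' - τ) := by field_simp
              rw [hz'eqz t h2]
              calc ‖z t - z' t'‖ = ‖(z t - z τ) + (z τ - z' t')‖ := by congr 1; abel
                _ ≤ ‖z t - z τ‖ + ‖z τ - z' t'‖ := norm_add_le _ _
                _ ≤ L * (τ - t) + L * (t' - τ) := add_le_add hb1 hb4
                _ = L * (t' - t) := by ring
            · have hm1 := hz'w t h2 (le_trans htt' ht'.2)
              have hm2 := hz'w t' h ht'.2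
              have hb2 := antilip (z τ) hp₀mem (z' t) hm1.1 (z' t') hm2.1
              rw [hm1.2, hm2.2] at hb2
              have hb3 := hHt s hs t ⟨ht.1, le_trans ht.2 hτ'1⟩ t' ⟨ht'.1, le_trans ht'.2 hτ'1⟩
              rw [abs_of_nonpos (by linarith), neg_sub] at hb3
              rw [hLdef]
              have h5 : σ * ‖z' t - z' t'‖ ≤ 2 * CH * (t' - t) := by nlinarith
              calc ‖z' t - z' t'‖ = σ⁻¹ * (σ * ‖z' t - z' t'‖) := by field_simp
                _ ≤ σ⁻¹ * (2 * CH * (t' - t)) := mul_le_mul_of_nonneg_left h5 (by positivity)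
                _ = 2 * CH / σ * (t' - t) := by field_simp
        exact ⟨z', by rw [hz'eqz 0 hτ0]; exact hz0, hz'φ, lipIcc hlipb⟩
  obtain ⟨N0, hN0⟩ := exists_nat_ge (1 / hstep)
  have hN0h : 1 ≤ (N0:ℝ) * hstep := by
    rw [div_le_iff₀ hhstep0] at hN0; linarith
  have hliftfull : ∀ s ∈ Icc (0:ℝ) 1, ∃ z : ℝ → E, z 0 = a ∧
      (∀ t ∈ Icc (0:ℝ) 1, φ (z t) = H s t) ∧
      (∀ t ∈ Icc (0:ℝ) 1, ∀ t' ∈ Icc (0:ℝ) 1, ‖z t - z t'‖ ≤ L * |t - t'|) := by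
    intro s hs
    obtain ⟨z, h1, h2, h3⟩ := hlift s hs N0
    rw [min_eq_right hN0h] at h2 h3
    exact ⟨z, h1, h2, h3⟩
  set δ0 : ℝ := σ * ρ / (8 * CH) with hδ0def
  have hδ00 : 0 < δ0 := by positivity
  have lipcont : ∀ z : ℝ → E,
      (∀ t ∈ Icc (0:ℝ) 1, ∀ t' ∈ Icc (0:ℝ) 1, ‖z t - z t'‖ ≤ L * |t - t'|) →
      ContinuousOn z (Icc 0 1) := by
    intro z hz
    have h1 : LipschitzOnWith (Real.toNNReal L) z (Icc 0 1) := by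
      rw [lipschitzOnWith_iff_dist_le_mul]
      intro x hx y hy
      rw [dist_eq_norm, Real.dist_eq, Real.coe_toNNReal _ hL0.le]
      exact hz x hx y hy
    exact h1.continuousOn
  have comp : ∀ s ∈ Icc (0:ℝ) 1, ∀ s' ∈ Icc (0:ℝ) 1, |s - s'| ≤ δ0 →
      ∀ z z' : ℝ → E, z 0 = a → (∀ t ∈ Icc (0:ℝ) 1, φ (z t) = H s t) →
      (∀ t ∈ Icc (0:ℝ) 1, ∀ t' ∈ Icc (0:ℝ) 1, ‖z t - z t'‖ ≤ L * |t - t'|) →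
      z' 0 = a → (∀ t ∈ Icc (0:ℝ) 1, φ (z' t) = H s' t) → ContinuousOn z' (Icc 0 1) →
      ∀ t ∈ Icc (0:ℝ) 1, ‖z t - z' t‖ ≤ ρ / 4 := by
    intro s hs s' hs' hss' z z' hz0 hzφ hzlip hz'0 hz'φ hz'c
    have hzc : ContinuousOn z (Icc 0 1) := lipcont z hzlip
    have hg : ContinuousOn (fun t => ‖z t - z' t‖) (Icc 0 1) := (hzc.sub hz'c).norm
    have step : ∀ t ∈ Icc (0:ℝ) 1, ‖z t - z' t‖ ≤ ρ → ‖z t - z' t‖ ≤ ρ / 4 := by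
      intro t ht hle
      have hzmem : z t ∈ closedBall a (L + 1) := by
        rw [mem_closedBall_iff_norm]
        have h1 := hzlip t ht 0 ⟨le_rfl, zero_le_one⟩
        rw [hz0] at h1
        have h2 : |t - 0| ≤ 1 := by rw [sub_zero, abs_of_nonneg ht.1]; exact ht.2
        nlinarith [hL0.le]
      have ha1 := antilip (z t) hzmem (z t) (mem_closedBall_self hρ0.le) (z' t)
        (by rw [mem_closedBall_iff_norm, norm_sub_rev]; exact hle)
      rw [hzφ t ht, hz'φ t ht] at ha1
      have h2 := hHs s s' t ht
      have h3 : CH * |s - s'| ≤ CH * δ0 := mul_le_mul_of_nonneg_left hss' hCH0.le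
      have h4 : CH * δ0 = σ * ρ / 8 := by rw [hδ0def]; field_simp
      nlinarith
    by_contra hbad
    push_neg at hbad
    obtain ⟨t₀, ht₀, ht₀'⟩ := hbad
    have ht₀ρ : ρ / 3 ≤ ‖z t₀ - z' t₀‖ := by
      by_contra hc
      push_neg at hc
      have := step t₀ ht₀ (by linarith)
      linarith
    set Bad := {t | t ∈ Icc (0:ℝ) 1 ∧ ρ / 3 ≤ ‖z t - z' t‖} with hBadDef
    have hBadne : Bad.Nonempty := ⟨t₀, ht₀, ht₀ρ⟩
    have hBadclosed : IsClosed Bad := by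
      have h1 := hg.preimage_isClosed_of_isClosed isClosed_Icc (isClosed_Ici (a := ρ/3))
      exact h1
    have hBbdd : BddBelow Bad := ⟨0, fun t ht => ht.1.1⟩
    set τs := sInf Bad with hτsdef
    have hτsBad : τs ∈ Bad := hBadclosed.csInf_mem hBadne hBbdd
    have hτs0 : 0 < τs := by
      rcases lt_or_eq_of_le hτsBad.1.1 with h | h
      · exact h
      · exfalso
        have h1 := hτsBad.2
        rw [← h, hz0, hz'0, sub_self, norm_zero] at h1
        linarith
    have hgood : ∀ t ∈ Icc (0:ℝ) 1, t < τs → ‖z t - z' t‖ ≤ ρ / 4 := by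
      intro t ht htτ
      apply step t ht
      by_contra hc
      push_neg at hc
      have h1 : t ∈ Bad := ⟨ht, by linarith⟩
      exact absurd (csInf_le hBbdd h1) (not_le.mpr htτ)
    have hmemc : τs ∈ closure (Ioo 0 τs) := by
      rw [closure_Ioo (ne_of_lt hτs0)]
      exact ⟨hτs0.le, le_rfl⟩
    have hnb : (nhdsWithin τs (Ioo 0 τs)).NeBot := mem_closure_iff_nhdsWithin_neBot.mp hmemc
    have htend : Filter.Tendsto (fun t => ‖z t - z' t‖) (nhdsWithin τs (Ioo 0 τs))
        (nhds (‖z τs - z' τs‖)) := by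
      have h1 : ContinuousWithinAt (fun t => ‖z t - z' t‖) (Icc 0 1) τs := hg τs hτsBad.1
      exact h1.tendsto.mono_left (nhdsWithin_mono _
        (fun x hx => ⟨hx.1.le, le_trans hx.2.le hτsBad.1.2⟩))
    have hfin : ‖z τs - z' τs‖ ≤ ρ / 4 := by
      apply le_of_tendsto htend
      filter_upwards [self_mem_nhdsWithin] with t ht
      exact hgood t ⟨ht.1.le, le_trans ht.2.le hτsBad.1.2⟩ ht.2
    have := hτsBad.2
    linarith
  -- endpoint map
  choose zf hzf0 hzfφ hzflip using hliftfull
  have key : ∀ s s' : ℝ, ∀ (hs : s ∈ Icc (0:ℝ) 1) (hs' : s' ∈ Icc (0:ℝ) 1),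
      |s - s'| ≤ δ0 → zf s hs 1 = zf s' hs' 1 := by
    intro s s' hs hs' hd
    have hcomp := comp s hs s' hs' hd (zf s hs) (zf s' hs') (hzf0 s hs) (hzfφ s hs)
      (hzflip s hs) (hzf0 s' hs') (hzfφ s' hs') (lipcont _ (hzflip s' hs'))
      1 ⟨zero_le_one, le_rfl⟩
    have hmem : zf s hs 1 ∈ closedBall a (L + 1) := by
      rw [mem_closedBall_iff_norm]
      have h1 := hzflip s hs 1 ⟨zero_le_one, le_rfl⟩ 0 ⟨le_rfl, zero_le_one⟩
      rw [hzf0 s hs] at h1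
      simp only [sub_zero, abs_one, mul_one] at h1
      linarith [hL0.le]
    have ha1 := antilip (zf s hs 1) hmem (zf s hs 1) (mem_closedBall_self hρ0.le)
      (zf s' hs' 1) (by rw [mem_closedBall_iff_norm, norm_sub_rev]; linarith)
    rw [hzfφ s hs 1 ⟨zero_le_one, le_rfl⟩, hzfφ s' hs' 1 ⟨zero_le_one, le_rfl⟩,
      hHs1, hHs1, sub_self, norm_zero] at ha1
    have h2 : ‖zf s hs 1 - zf s' hs' 1‖ ≤ 0 := by nlinarith
    have h3 := le_antisymm h2 (norm_nonneg _)
    rwa [norm_eq_zero, sub_eq_zero] at h3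
  have h0mem : (0:ℝ) ∈ Icc (0:ℝ) 1 := ⟨le_rfl, zero_le_one⟩
  have h1mem : (1:ℝ) ∈ Icc (0:ℝ) 1 := ⟨zero_le_one, le_rfl⟩
  -- identify the endpoint at s = 0 with b
  have he0 : zf 0 h0mem 1 = b := by
    have hγφ : ∀ t ∈ Icc (0:ℝ) 1, φ (a + t • (b - a)) = H 0 t := by
      intro t ht
      rw [hHdef]
      simp only [sub_zero, one_smul, zero_smul, add_zero]
      rfl
    have hγc : ContinuousOn (fun t : ℝ => a + t • (b - a)) (Icc 0 1) := by
      apply Continuous.continuousOn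
      exact continuous_const.add (continuous_id.smul continuous_const)
    have hcomp := comp 0 h0mem 0 h0mem (by simp [hδ00.le]) (zf 0 h0mem)
      (fun t : ℝ => a + t • (b - a)) (hzf0 0 h0mem) (hzfφ 0 h0mem) (hzflip 0 h0mem)
      (by simp) hγφ hγc 1 h1mem
    have hmem : zf 0 h0mem 1 ∈ closedBall a (L + 1) := by
      rw [mem_closedBall_iff_norm]
      have h1 := hzflip 0 h0mem 1 h1mem 0 h0mem
      rw [hzf0 0 h0mem] at h1
      simp only [sub_zero, abs_one, mul_one] at h1
      linarith [hL0.le]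
    have ha1 := antilip (zf 0 h0mem 1) hmem (zf 0 h0mem 1) (mem_closedBall_self hρ0.le)
      (a + (1:ℝ) • (b - a)) (by rw [mem_closedBall_iff_norm, norm_sub_rev]; linarith)
    rw [hzfφ 0 h0mem 1 h1mem, hγφ 1 h1mem, sub_self, norm_zero] at ha1
    have h2 : ‖zf 0 h0mem 1 - (a + (1:ℝ) • (b - a))‖ ≤ 0 := by nlinarith
    have h3 := le_antisymm h2 (norm_nonneg _)
    rw [norm_eq_zero, sub_eq_zero] at h3
    rw [h3, one_smul]
    abel
  -- identify the endpoint at s = 1 with a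
  have he1 : zf 1 h1mem 1 = a := by
    have hcφ : ∀ t ∈ Icc (0:ℝ) 1, φ ((fun _ : ℝ => a) t) = H 1 t := by
      intro t ht
      rw [hHdef]
      simp only [sub_self, zero_smul, one_smul, zero_add]
    have hcomp := comp 1 h1mem 1 h1mem (by simp [hδ00.le]) (zf 1 h1mem)
      (fun _ : ℝ => a) (hzf0 1 h1mem) (hzfφ 1 h1mem) (hzflip 1 h1mem)
      rfl hcφ continuousOn_const 1 h1mem
    have hmem : zf 1 h1mem 1 ∈ closedBall a (L + 1) := by
      rw [mem_closedBall_iff_norm]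
      have h1 := hzflip 1 h1mem 1 h1mem 0 h0mem
      rw [hzf0 1 h1mem] at h1
      simp only [sub_zero, abs_one, mul_one] at h1
      linarith [hL0.le]
    have ha1 := antilip (zf 1 h1mem 1) hmem (zf 1 h1mem 1) (mem_closedBall_self hρ0.le)
      a (by rw [mem_closedBall_iff_norm, norm_sub_rev]; linarith)
    rw [hzfφ 1 h1mem 1 h1mem, hcφ 1 h1mem, sub_self, norm_zero] at ha1
    have h2 : ‖zf 1 h1mem 1 - a‖ ≤ 0 := by nlinarith
    have h3 := le_antisymm h2 (norm_nonneg _)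
    rwa [norm_eq_zero, sub_eq_zero] at h3
  -- chain over grid
  obtain ⟨N, hN⟩ := exists_nat_ge (1 / δ0)
  have hNδ : 1 ≤ (N:ℝ) * δ0 := by
    rw [div_le_iff₀ hδ00] at hN; linarith
  have hgridmem : ∀ k : ℕ, min ((k:ℝ) * δ0) 1 ∈ Icc (0:ℝ) 1 :=
    fun k => ⟨le_min (by positivity) zero_le_one, min_le_right _ _⟩
  have hchain : ∀ k : ℕ, zf (min ((k:ℝ) * δ0) 1) (hgridmem k) 1 = zf 0 h0mem 1 := by
    intro k
    induction k with
    | zero =>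
      apply key
      rw [Nat.cast_zero, zero_mul, min_eq_left zero_le_one, sub_zero, abs_zero]
      exact hδ00.le
    | succ k ih =>
      rw [← ih]
      apply key
      have hcast : ((k+1 : ℕ) : ℝ) = (k : ℝ) + 1 := by push_cast; ring
      rw [hcast]
      have h1 : min ((k:ℝ) * δ0) 1 ≤ min (((k:ℝ)+1) * δ0) 1 :=
        min_le_min (by nlinarith) le_rfl
      rw [abs_of_nonneg (by linarith)]
      rcases le_total (((k:ℝ)+1) * δ0) 1 with h | h
      · rw [min_eq_left h, min_eq_left (by nlinarith)]
        ring_nf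
        linarith
      · rw [min_eq_right h]
        rcases le_total ((k:ℝ) * δ0) 1 with h2 | h2
        · rw [min_eq_left h2]; nlinarith
        · rw [min_eq_right h2]; simp [hδ00.le]
  have hlast : zf (min ((N:ℝ) * δ0) 1) (hgridmem N) 1 = zf 1 h1mem 1 := by
    apply key
    rw [min_eq_right hNδ, sub_self, abs_zero]
    exact hδ00.le
  calc a = zf 1 h1mem 1 := he1.symm
    _ = zf (min ((N:ℝ) * δ0) 1) (hgridmem N) 1 := hlast.symm
    _ = zf 0 h0mem 1 := hchain N
    _ = b := he0

end Aux

section EnLemmas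

variable {k : ℕ}

lemma en_nonneg (x : Fin k → ℝ) : 0 ≤ en x := Real.sqrt_nonneg _

lemma en_eq_norm (x : Fin k → ℝ) :
    en x = ‖(WithLp.linearEquiv 2 ℝ (Fin k → ℝ)).symm x‖ := by
  rw [en, EuclideanSpace.norm_eq]
  congr 1
  apply Finset.sum_congr rfl
  intro i _
  rw [Real.norm_eq_abs, sq_abs]
  rfl

lemma en_sub_le (x y : Fin k → ℝ) : en (x - y) ≤ en x + en y := by
  rw [en_eq_norm, en_eq_norm, en_eq_norm, map_sub]
  exact norm_sub_le _ _

lemma en_neg (x : Fin k → ℝ) : en (-x) = en x := by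
  rw [en_eq_norm, en_eq_norm, map_neg, norm_neg]

lemma norm_le_en (x : Fin k → ℝ) : ‖x‖ ≤ en x := by
  rw [pi_norm_le_iff_of_nonneg (en_nonneg x)]
  intro i
  rw [Real.norm_eq_abs, ← Real.sqrt_sq_eq_abs]
  apply Real.sqrt_le_sqrt
  exact Finset.single_le_sum (fun j _ => sq_nonneg (x j)) (Finset.mem_univ i)

lemma en_le (x : Fin k → ℝ) : en x ≤ Real.sqrt k * ‖x‖ := by
  rw [en]
  have h1 : ∑ i, x i ^ 2 ≤ (k : ℝ) * ‖x‖ ^ 2 := by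
    calc ∑ i, x i ^ 2 ≤ ∑ _i : Fin k, ‖x‖ ^ 2 := by
          apply Finset.sum_le_sum
          intro i _
          have h1 := norm_le_pi_norm x i
          have h2 := abs_nonneg (x i)
          rw [Real.norm_eq_abs] at h1
          nlinarith [sq_abs (x i)]
      _ = (k : ℝ) * ‖x‖ ^ 2 := by simp [Finset.sum_const, Finset.card_univ, mul_comm]
  calc Real.sqrt (∑ i, x i ^ 2) ≤ Real.sqrt ((k : ℝ) * ‖x‖ ^ 2) := Real.sqrt_le_sqrt h1
    _ = Real.sqrt k * ‖x‖ := by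
        rw [Real.sqrt_mul (Nat.cast_nonneg k), Real.sqrt_sq (norm_nonneg x)]

lemma en_eq_zero {x : Fin k → ℝ} (h : en x = 0) : x = 0 := by
  rw [en_eq_norm, norm_eq_zero] at h
  have := congrArg (WithLp.linearEquiv 2 ℝ (Fin k → ℝ)) h
  simpa using this

lemma continuous_en : Continuous (en (k := k)) := by
  apply Real.continuous_sqrt.comp
  exact continuous_finset_sum _ (fun i _ => (continuous_apply i).pow 2)

end EnLemmas

lemma sqrt_add_sq_le {a b : ℝ} (ha : 0 ≤ a) (hb : 0 ≤ b) :
    Real.sqrt (a ^ 2 + b ^ 2) ≤ a + b := by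
  calc Real.sqrt (a ^ 2 + b ^ 2) ≤ Real.sqrt ((a + b) ^ 2) :=
        Real.sqrt_le_sqrt (by nlinarith)
    _ = a + b := Real.sqrt_sq (by positivity)

lemma le_sqrt_add_sq_left {a : ℝ} (b : ℝ) (ha : 0 ≤ a) : a ≤ Real.sqrt (a ^ 2 + b ^ 2) := by
  calc a = Real.sqrt (a ^ 2) := (Real.sqrt_sq ha).symm
    _ ≤ Real.sqrt (a ^ 2 + b ^ 2) := Real.sqrt_le_sqrt (by nlinarith)

lemma le_sqrt_add_sq_right {b : ℝ} (a : ℝ) (hb : 0 ≤ b) : b ≤ Real.sqrt (a ^ 2 + b ^ 2) := by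
  calc b = Real.sqrt (b ^ 2) := (Real.sqrt_sq hb).symm
    _ ≤ Real.sqrt (a ^ 2 + b ^ 2) := Real.sqrt_le_sqrt (by nlinarith)

lemma jac_mulVec {n q : ℕ} (g : (Fin n → ℝ) → Fin q → ℝ) (xt : Fin n → ℝ) (v : Fin n → ℝ) :
    (jac g xt).mulVec v = fderiv ℝ g xt v := by
  rw [jac, ← Matrix.toLin'_apply, Matrix.toLin'_toMatrix']
  rfl

lemma taylor_rem {n q : ℕ} {g : (Fin n → ℝ) → Fin q → ℝ} (hg : Differentiable ℝ g)
    {xt xs : Fin n → ℝ} {ε δ : ℝ} (hδ : 0 < δ)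
    (hmod : ∀ y ∈ Metric.ball xt δ, ‖fderiv ℝ g y - fderiv ℝ g xt‖ ≤ ε)
    (hxs : xs ∈ Metric.ball xt δ) :
    ‖g xs - g xt - fderiv ℝ g xt (xs - xt)‖ ≤ ε * ‖xs - xt‖ := by
  have hbound : ∀ y ∈ Metric.ball xt δ,
      ‖fderiv ℝ (fun x => g x - fderiv ℝ g xt x) y‖ ≤ ε := by
    intro y hy
    rw [fderiv_fun_sub (hg y) ((fderiv ℝ g xt).differentiableAt), ContinuousLinearMap.fderiv]
    exact hmod y hy
  have hmvt := Convex.norm_image_sub_le_of_norm_fderiv_le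
    (f := fun x => g x - fderiv ℝ g xt x) (s := Metric.ball xt δ)
    (fun y _ => (hg y).sub ((fderiv ℝ g xt).differentiableAt))
    hbound (convex_ball _ _) (mem_ball_self hδ) hxs
  have heq : g xs - fderiv ℝ g xt xs - (g xt - fderiv ℝ g xt xt)
      = g xs - g xt - fderiv ℝ g xt (xs - xt) := by
    rw [map_sub]; abel
  rwa [heq] at hmvt

set_option maxHeartbeats 1600000 in
/-- Lemma 2 of the appendix (`p = m`): under (A2), (A4), (A5), for every compact
`X` with `ℬ ⊆ X × 𝕌` there is `c_{s,1} > 0` such that every nonlinear steady state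
`(xˢ,uˢ) ∈ 𝒵ˢ`, every `x̃ ∈ X` and every `ũ ∈ 𝕌` satisfy
`‖(xˢ,uˢ) − (x̃,ũ)‖₂ ≤ c_{s,1}(‖h(xˢ,uˢ) − h(x̃,ũ)‖₂ + ‖x̃ − f(x̃,ũ)‖₂)`. -/
theorem stmt6 {n m : ℕ} (f0 : (Fin n → ℝ) → Fin n → ℝ)
    (h0 : (Fin n → ℝ) → Fin m → ℝ)
    (B : Matrix (Fin n) (Fin m) ℝ) (D : Matrix (Fin m) (Fin m) ℝ)
    (U Us : Set (Fin m → ℝ))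
    (hU : IsCompact U) (hUs : IsCompact Us) (hUsconv : Convex ℝ Us)
    (hUsint : Us ⊆ interior U)
    (hf0 : ContDiff ℝ 2 f0) (hh0 : ContDiff ℝ 2 h0)
    (σs : ℝ) (hσs : 0 < σs) (hA2 : A2holds f0 h0 B D σs)
    (σl : ℝ) (hσl : 0 < σl) (hA4 : A4holds f0 σl)
    (𝓑 : Set ((Fin n → ℝ) × (Fin m → ℝ))) (h𝓑 : IsCompact 𝓑)
    (hA5 : ∀ xt : Fin n → ℝ, Zlin f0 B Us xt ⊆ 𝓑) :
    ∀ X : Set (Fin n → ℝ), IsCompact X → 𝓑 ⊆ Set.prod X U →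
      ∃ cs1 : ℝ, 0 < cs1 ∧
        ∀ xs : Fin n → ℝ, ∀ us : Fin m → ℝ, (xs, us) ∈ Zs f0 B Us →
          ∀ xt ∈ X, ∀ ut ∈ U,
            Real.sqrt (en (xs - xt) ^ 2 + en (us - ut) ^ 2) ≤
              cs1 * (en (hout h0 D xs us - hout h0 D xt ut) +
                     en (xt - fdyn f0 B xt ut)) := by
  intro X hX hBXU
  classical
  have hf0d : Differentiable ℝ f0 := hf0.differentiable two_ne_zero
  have hh0d : Differentiable ℝ h0 := hh0.differentiable two_ne_zero
  set φ : ((Fin n → ℝ) × (Fin m → ℝ)) → ((Fin n → ℝ) × (Fin m → ℝ)) :=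
    fun z => (z.1 - f0 z.1 - B.mulVec z.2, h0 z.1 + D.mulVec z.2) with hφdef
  set Bc : (Fin m → ℝ) →L[ℝ] (Fin n → ℝ) :=
    LinearMap.toContinuousLinearMap (Matrix.mulVecLin B) with hBcdef
  set Dc : (Fin m → ℝ) →L[ℝ] (Fin m → ℝ) :=
    LinearMap.toContinuousLinearMap (Matrix.mulVecLin D) with hDcdef
  set Φ' : ((Fin n → ℝ) × (Fin m → ℝ)) →
      (((Fin n → ℝ) × (Fin m → ℝ)) →L[ℝ] ((Fin n → ℝ) × (Fin m → ℝ))) :=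
    fun z => ((ContinuousLinearMap.fst ℝ (Fin n → ℝ) (Fin m → ℝ)
        - (fderiv ℝ f0 z.1).comp (ContinuousLinearMap.fst ℝ (Fin n → ℝ) (Fin m → ℝ))
        - Bc.comp (ContinuousLinearMap.snd ℝ (Fin n → ℝ) (Fin m → ℝ))).prod
      ((fderiv ℝ h0 z.1).comp (ContinuousLinearMap.fst ℝ (Fin n → ℝ) (Fin m → ℝ))
        + Dc.comp (ContinuousLinearMap.snd ℝ (Fin n → ℝ) (Fin m → ℝ)))) with hΦ'def
  have hHasF : ∀ z, HasFDerivAt φ (Φ' z) z := by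
    intro z
    have h1 : HasFDerivAt (fun w : (Fin n → ℝ) × (Fin m → ℝ) => w.1)
        (ContinuousLinearMap.fst ℝ (Fin n → ℝ) (Fin m → ℝ)) z := hasFDerivAt_fst
    have h2 : HasFDerivAt (fun w : (Fin n → ℝ) × (Fin m → ℝ) => f0 w.1)
        ((fderiv ℝ f0 z.1).comp (ContinuousLinearMap.fst ℝ (Fin n → ℝ) (Fin m → ℝ))) z :=
      (hf0d z.1).hasFDerivAt.comp z hasFDerivAt_fst
    have h3 : HasFDerivAt (fun w : (Fin n → ℝ) × (Fin m → ℝ) => B.mulVec w.2)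
        (Bc.comp (ContinuousLinearMap.snd ℝ (Fin n → ℝ) (Fin m → ℝ))) z :=
      Bc.hasFDerivAt.comp z hasFDerivAt_snd
    have h4 : HasFDerivAt (fun w : (Fin n → ℝ) × (Fin m → ℝ) => h0 w.1)
        ((fderiv ℝ h0 z.1).comp (ContinuousLinearMap.fst ℝ (Fin n → ℝ) (Fin m → ℝ))) z :=
      (hh0d z.1).hasFDerivAt.comp z hasFDerivAt_fst
    have h5 : HasFDerivAt (fun w : (Fin n → ℝ) × (Fin m → ℝ) => D.mulVec w.2)
        (Dc.comp (ContinuousLinearMap.snd ℝ (Fin n → ℝ) (Fin m → ℝ))) z :=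
      Dc.hasFDerivAt.comp z hasFDerivAt_snd
    exact ((h1.sub h2).sub h3).prodMk (h4.add h5)
  have hfderivφ : ∀ z, fderiv ℝ φ z = Φ' z := fun z => (hHasF z).fderiv
  have hφC1 : ContDiff ℝ 1 φ := by
    apply ContDiff.prodMk
    · exact (contDiff_fst.sub ((hf0.of_le one_le_two).comp contDiff_fst)).sub
        (Bc.contDiff.comp contDiff_snd)
    · exact ((hh0.of_le one_le_two).comp contDiff_fst).add (Dc.contDiff.comp contDiff_snd)
  set κ : ℝ := Real.sqrt n + Real.sqrt m + 1 with hκdef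
  have hκ0 : 0 < κ := by positivity
  set σ' : ℝ := σs / κ with hσ'def
  have hσ'0 : 0 < σ' := by positivity
  have hlow : ∀ z ξ, σ' * ‖ξ‖ ≤ ‖fderiv ℝ φ z ξ‖ := by
    intro z ξ
    rw [hfderivφ z]
    obtain ⟨v, w⟩ := ξ
    have hA2z := hA2 z.1 v w
    rw [jac_mulVec, jac_mulVec] at hA2z
    have hc1 : (Φ' z (v, w)).1 = v - fderiv ℝ f0 z.1 v - B.mulVec w := rfl
    have hc2 : (Φ' z (v, w)).2 = fderiv ℝ h0 z.1 v + D.mulVec w := rfl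
    have hP : en (fderiv ℝ f0 z.1 v - v + B.mulVec w) = en (-(Φ' z (v, w)).1) := by
      rw [hc1]; congr 1; abel
    have hQ : en (fderiv ℝ h0 z.1 v + D.mulVec w) = en ((Φ' z (v, w)).2) := by rw [hc2]
    rw [hP, hQ, en_neg] at hA2z
    have hnormξ : ‖(v, w)‖ ≤ Real.sqrt (en v ^ 2 + en w ^ 2) := by
      rw [Prod.norm_def]
      apply max_le
      · exact le_trans (norm_le_en v) (le_sqrt_add_sq_left _ (en_nonneg v))
      · exact le_trans (norm_le_en w) (le_sqrt_add_sq_right _ (en_nonneg w))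
    have hRHS : Real.sqrt (en ((Φ' z (v, w)).1) ^ 2 + en ((Φ' z (v, w)).2) ^ 2)
        ≤ κ * ‖Φ' z (v, w)‖ := by
      have h1 : en ((Φ' z (v, w)).1) ≤ Real.sqrt n * ‖Φ' z (v, w)‖ :=
        le_trans (en_le _)
          (mul_le_mul_of_nonneg_left (norm_fst_le _) (Real.sqrt_nonneg _))
      have h2 : en ((Φ' z (v, w)).2) ≤ Real.sqrt m * ‖Φ' z (v, w)‖ :=
        le_trans (en_le _)
          (mul_le_mul_of_nonneg_left (norm_snd_le _) (Real.sqrt_nonneg _))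
      calc Real.sqrt (en ((Φ' z (v, w)).1) ^ 2 + en ((Φ' z (v, w)).2) ^ 2)
          ≤ en ((Φ' z (v, w)).1) + en ((Φ' z (v, w)).2) :=
            sqrt_add_sq_le (en_nonneg _) (en_nonneg _)
        _ ≤ Real.sqrt n * ‖Φ' z (v, w)‖ + Real.sqrt m * ‖Φ' z (v, w)‖ := add_le_add h1 h2
        _ ≤ κ * ‖Φ' z (v, w)‖ := by rw [hκdef]; nlinarith [norm_nonneg (Φ' z (v, w))]
    calc σ' * ‖(v, w)‖ ≤ σ' * Real.sqrt (en v ^ 2 + en w ^ 2) :=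
          mul_le_mul_of_nonneg_left hnormξ hσ'0.le
      _ = (σs * Real.sqrt (en v ^ 2 + en w ^ 2)) / κ := by rw [hσ'def]; ring
      _ ≤ Real.sqrt (en ((Φ' z (v, w)).1) ^ 2 + en ((Φ' z (v, w)).2) ^ 2) / κ :=
          (div_le_div_iff_of_pos_right hκ0).mpr hA2z
      _ ≤ ‖Φ' z (v, w)‖ := by rw [div_le_iff₀ hκ0]; nlinarith [hRHS]
  have hinjφ : Function.Injective φ := key_inj φ hφC1 σ' hσ'0 hlow
  -- compactness of the steady-state set
  have hZsub : Zs f0 B Us ⊆ 𝓑 := by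
    intro z hz
    apply hA5 z.1
    refine ⟨hz.1, ?_⟩
    rw [flin, show (jac f0 z.1).mulVec z.1 + B.mulVec z.2 + (f0 z.1 - (jac f0 z.1).mulVec z.1)
      = f0 z.1 + B.mulVec z.2 by abel]
    exact hz.2
  have hZclosed : IsClosed (Zs f0 B Us) := by
    have h1 : IsClosed {z : (Fin n → ℝ) × (Fin m → ℝ) | z.2 ∈ Us} :=
      hUs.isClosed.preimage continuous_snd
    have h2 : IsClosed {z : (Fin n → ℝ) × (Fin m → ℝ) | z.1 = fdyn f0 B z.1 z.2} := by
      apply isClosed_eq continuous_fst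
      exact ((hf0.continuous).comp continuous_fst).add (Bc.continuous.comp continuous_snd)
    exact h1.inter h2
  have hZcomp : IsCompact (Zs f0 B Us) := h𝓑.of_isClosed_subset hZclosed hZsub
  obtain ⟨RX0, hRX0⟩ := hX.isBounded.subset_closedBall 0
  obtain ⟨RU0, hRU0⟩ := hU.isBounded.subset_closedBall 0
  set RX : ℝ := max RX0 0 with hRXdef
  set RU : ℝ := max RU0 0 with hRUdef
  have hRX : X ⊆ closedBall 0 RX :=
    subset_trans hRX0 (closedBall_subset_closedBall (le_max_left _ _))
  have hRU : U ⊆ closedBall 0 RU :=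
    subset_trans hRU0 (closedBall_subset_closedBall (le_max_left _ _))
  have hRXnn : 0 ≤ RX := le_max_right _ _
  have hRUnn : 0 ≤ RU := le_max_right _ _
  set ε0 : ℝ := σs / (2 * (Real.sqrt n + Real.sqrt m) + 2) with hε0def
  have hε00 : 0 < ε0 := by positivity
  have hDf0c : Continuous (fderiv ℝ f0) := hf0.continuous_fderiv two_ne_zero
  have hDh0c : Continuous (fderiv ℝ h0) := hh0.continuous_fderiv two_ne_zero
  obtain ⟨δf, hδf0, hδf⟩ := uniformContinuousOn_iff.mp
    ((isCompact_closedBall (0 : Fin n → ℝ) (RX + 3)).uniformContinuousOn_of_continuous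
      hDf0c.continuousOn) ε0 hε00
  obtain ⟨δh, hδh0, hδh⟩ := uniformContinuousOn_iff.mp
    ((isCompact_closedBall (0 : Fin n → ℝ) (RX + 3)).uniformContinuousOn_of_continuous
      hDh0c.continuousOn) ε0 hε00
  set δ1 : ℝ := min (min δf δh) 1 with hδ1def
  have hδ10 : 0 < δ1 := lt_min (lt_min hδf0 hδh0) one_pos
  have hδ11 : δ1 ≤ 1 := min_le_right _ _
  have hδ1f : δ1 ≤ δf := le_trans (min_le_left _ _) (min_le_left _ _)
  have hδ1h : δ1 ≤ δh := le_trans (min_le_left _ _) (min_le_right _ _)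
  set δ2 : ℝ := δ1 / 2 with hδ2def
  have hδ20 : 0 < δ2 := by positivity
  set Rf : ((Fin n → ℝ) × (Fin m → ℝ)) × ((Fin n → ℝ) × (Fin m → ℝ)) → ℝ := fun q =>
    en (hout h0 D q.1.1 q.1.2 - hout h0 D q.2.1 q.2.2)
      + en (q.2.1 - fdyn f0 B q.2.1 q.2.2) with hRfdef
  have hRfc : Continuous Rf := by
    apply Continuous.add
    · apply continuous_en.comp
      apply Continuous.sub
      · exact ((hh0.continuous).comp (continuous_fst.comp continuous_fst)).add
          (Dc.continuous.comp (continuous_snd.comp continuous_fst))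
      · exact ((hh0.continuous).comp (continuous_fst.comp continuous_snd)).add
          (Dc.continuous.comp (continuous_snd.comp continuous_snd))
    · apply continuous_en.comp
      apply Continuous.sub
      · exact continuous_fst.comp continuous_snd
      · exact ((hf0.continuous).comp (continuous_fst.comp continuous_snd)).add
          (Bc.continuous.comp (continuous_snd.comp continuous_snd))
  have hRfnn : ∀ q, 0 ≤ Rf q := fun q => add_nonneg (en_nonneg _) (en_nonneg _)
  set K' := ((Zs f0 B Us) ×ˢ (X ×ˢ U)) ∩
    {q : ((Fin n → ℝ) × (Fin m → ℝ)) × ((Fin n → ℝ) × (Fin m → ℝ)) |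
      δ2 ≤ ‖q.1.1 - q.2.1‖} with hK'def
  have hK'c : IsCompact K' := by
    apply IsCompact.inter_right (hZcomp.prod (hX.prod hU))
    apply isClosed_le continuous_const
    exact ((continuous_fst.comp continuous_fst).sub (continuous_fst.comp continuous_snd)).norm
  have hRfpos : ∀ q ∈ K', 0 < Rf q := by
    intro q hq
    rcases eq_or_lt_of_le (hRfnn q) with h | h
    · exfalso
      have hsum : en (hout h0 D q.1.1 q.1.2 - hout h0 D q.2.1 q.2.2)
          + en (q.2.1 - fdyn f0 B q.2.1 q.2.2) = 0 := h.symm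
      have hA0 : en (hout h0 D q.1.1 q.1.2 - hout h0 D q.2.1 q.2.2) = 0 :=
        le_antisymm (by linarith [en_nonneg (q.2.1 - fdyn f0 B q.2.1 q.2.2)]) (en_nonneg _)
      have hB0 : en (q.2.1 - fdyn f0 B q.2.1 q.2.2) = 0 :=
        le_antisymm (by have := en_nonneg (hout h0 D q.1.1 q.1.2 - hout h0 D q.2.1 q.2.2); linarith) (en_nonneg _)
      have hv1 := en_eq_zero hA0
      have hv2 := en_eq_zero hB0
      have hsteady : q.1.1 = fdyn f0 B q.1.1 q.1.2 := hq.1.1.2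
      have hφeq : φ q.1 = φ q.2 := by
        have e1 : q.1.1 - f0 q.1.1 - B.mulVec q.1.2 = 0 := by
          rw [sub_sub]; exact sub_eq_zero.mpr hsteady
        have e2 : q.2.1 - f0 q.2.1 - B.mulVec q.2.2 = 0 := by
          rw [sub_sub]; exact hv2
        have e3 : h0 q.1.1 + D.mulVec q.1.2 = h0 q.2.1 + D.mulVec q.2.2 := sub_eq_zero.mp hv1
        show (q.1.1 - f0 q.1.1 - B.mulVec q.1.2, h0 q.1.1 + D.mulVec q.1.2)
            = (q.2.1 - f0 q.2.1 - B.mulVec q.2.2, h0 q.2.1 + D.mulVec q.2.2)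
        rw [e1, e2, e3]
      have hq12 : q.1 = q.2 := hinjφ hφeq
      have hd : δ2 ≤ ‖q.1.1 - q.2.1‖ := hq.2
      rw [hq12] at hd
      simp only [sub_self, norm_zero] at hd
      linarith
    · exact h
  obtain ⟨r, hr0, hrle⟩ : ∃ r : ℝ, 0 < r ∧ ∀ q ∈ K', r ≤ Rf q := by
    rcases K'.eq_empty_or_nonempty with h | h
    · exact ⟨1, one_pos, by rw [h]; intro q hq; exact absurd hq (Set.notMem_empty q)⟩
    · obtain ⟨q0, hq0, hq0min⟩ := hK'c.exists_isMinOn h hRfc.continuousOn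
      exact ⟨Rf q0, hRfpos q0 hq0, fun q hq => hq0min hq⟩
  set D0 : ℝ := Real.sqrt n * (2 * RX) + Real.sqrt m * (2 * RU) with hD0def
  have hD0nn : 0 ≤ D0 := by positivity
  refine ⟨max (2 / σs) (D0 / r), lt_of_lt_of_le (by positivity) (le_max_left _ _), ?_⟩
  intro xs us hZmem xt hxt ut hut
  have hxsX : xs ∈ X := (hBXU (hZsub hZmem)).1
  have husU : us ∈ U := (hBXU (hZsub hZmem)).2
  have hRvnn : 0 ≤ en (hout h0 D xs us - hout h0 D xt ut) + en (xt - fdyn f0 B xt ut) :=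
    add_nonneg (en_nonneg _) (en_nonneg _)
  by_cases hcase : ‖xs - xt‖ ≤ δ2
  case pos =>
    have hxtB : xt ∈ closedBall (0 : Fin n → ℝ) (RX + 3) :=
      closedBall_subset_closedBall (by linarith) (hRX hxt)
    have hballB : ∀ y ∈ Metric.ball xt δ1, y ∈ closedBall (0 : Fin n → ℝ) (RX + 3) := by
      intro y hy
      rw [mem_closedBall]
      have h1 : dist y xt < δ1 := mem_ball.mp hy
      have h2 : dist xt (0 : Fin n → ℝ) ≤ RX := mem_closedBall.mp (hRX hxt)
      calc dist y 0 ≤ dist y xt + dist xt 0 := dist_triangle _ _ _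
        _ ≤ δ1 + RX := by linarith
        _ ≤ RX + 3 := by linarith
    have hmodf : ∀ y ∈ Metric.ball xt δ1, ‖fderiv ℝ f0 y - fderiv ℝ f0 xt‖ ≤ ε0 := by
      intro y hy
      have h3 := hδf y (hballB y hy) xt hxtB
        (lt_of_lt_of_le (mem_ball.mp hy) hδ1f)
      rw [dist_eq_norm] at h3
      exact h3.le
    have hmodh : ∀ y ∈ Metric.ball xt δ1, ‖fderiv ℝ h0 y - fderiv ℝ h0 xt‖ ≤ ε0 := by
      intro y hy
      have h3 := hδh y (hballB y hy) xt hxtB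
        (lt_of_lt_of_le (mem_ball.mp hy) hδ1h)
      rw [dist_eq_norm] at h3
      exact h3.le
    have hxsmem : xs ∈ Metric.ball xt δ1 := by
      rw [mem_ball, dist_eq_norm]
      calc ‖xs - xt‖ ≤ δ2 := hcase
        _ < δ1 := by rw [hδ2def]; linarith
    have hr1 := taylor_rem hf0d hδ10 hmodf hxsmem
    have hr2 := taylor_rem hh0d hδ10 hmodh hxsmem
    have hA2i := hA2 xt (xs - xt) (us - ut)
    rw [jac_mulVec, jac_mulVec] at hA2i
    have hxs_eq : xs = f0 xs + B.mulVec us := hZmem.2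
    have hBus : B.mulVec us = xs - f0 xs := by
      rw [eq_sub_iff_add_eq, add_comm]; exact hxs_eq.symm
    have id1 : fderiv ℝ f0 xt (xs - xt) - (xs - xt) + B.mulVec (us - ut)
        = (xt - fdyn f0 B xt ut) - (f0 xs - f0 xt - fderiv ℝ f0 xt (xs - xt)) := by
      rw [Matrix.mulVec_sub, hBus]
      show _ = xt - (f0 xt + B.mulVec ut) - _
      abel
    have id2 : fderiv ℝ h0 xt (xs - xt) + D.mulVec (us - ut)
        = (hout h0 D xs us - hout h0 D xt ut)
          - (h0 xs - h0 xt - fderiv ℝ h0 xt (xs - xt)) := by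
      rw [Matrix.mulVec_sub]
      show _ = (h0 xs + D.mulVec us) - (h0 xt + D.mulVec ut) - _
      abel
    set Lv := Real.sqrt (en (xs - xt) ^ 2 + en (us - ut) ^ 2) with hLvdef
    have hLvnn : 0 ≤ Lv := Real.sqrt_nonneg _
    have hxx : ‖xs - xt‖ ≤ Lv := le_trans (norm_le_en _)
      (by rw [hLvdef]; exact le_sqrt_add_sq_left _ (en_nonneg _))
    have hsq : σs * Lv ≤ en (fderiv ℝ f0 xt (xs - xt) - (xs - xt) + B.mulVec (us - ut))
        + en (fderiv ℝ h0 xt (xs - xt) + D.mulVec (us - ut)) :=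
      le_trans hA2i (sqrt_add_sq_le (en_nonneg _) (en_nonneg _))
    have hen1 : en (fderiv ℝ f0 xt (xs - xt) - (xs - xt) + B.mulVec (us - ut))
        ≤ en (xt - fdyn f0 B xt ut) + Real.sqrt n * (ε0 * ‖xs - xt‖) := by
      rw [id1]
      refine le_trans (en_sub_le _ _) ?_
      have h1 : en (f0 xs - f0 xt - fderiv ℝ f0 xt (xs - xt))
          ≤ Real.sqrt n * (ε0 * ‖xs - xt‖) :=
        le_trans (en_le _) (mul_le_mul_of_nonneg_left hr1 (Real.sqrt_nonneg _))
      linarith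
    have hen2 : en (fderiv ℝ h0 xt (xs - xt) + D.mulVec (us - ut))
        ≤ en (hout h0 D xs us - hout h0 D xt ut) + Real.sqrt m * (ε0 * ‖xs - xt‖) := by
      rw [id2]
      refine le_trans (en_sub_le _ _) ?_
      have h1 : en (h0 xs - h0 xt - fderiv ℝ h0 xt (xs - xt))
          ≤ Real.sqrt m * (ε0 * ‖xs - xt‖) :=
        le_trans (en_le _) (mul_le_mul_of_nonneg_left hr2 (Real.sqrt_nonneg _))
      linarith
    have hεb : (Real.sqrt n + Real.sqrt m) * ε0 ≤ σs / 2 := by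
      rw [hε0def, mul_div_assoc']
      rw [div_le_div_iff₀ (by positivity) (by norm_num : (0:ℝ) < 2)]
      nlinarith [Real.sqrt_nonneg (n:ℝ), Real.sqrt_nonneg (m:ℝ), hσs.le]
    have h2' : (Real.sqrt n + Real.sqrt m) * ε0 * ‖xs - xt‖ ≤ σs / 2 * Lv :=
      mul_le_mul hεb hxx (norm_nonneg _) (by positivity)
    have hcomb : σs * Lv ≤ (en (hout h0 D xs us - hout h0 D xt ut)
        + en (xt - fdyn f0 B xt ut)) + σs / 2 * Lv := by
      nlinarith [hsq, hen1, hen2, h2']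
    have h1 : σs / 2 * Lv ≤ en (hout h0 D xs us - hout h0 D xt ut)
        + en (xt - fdyn f0 B xt ut) := by linarith
    have hfinal : Lv ≤ 2 / σs * (en (hout h0 D xs us - hout h0 D xt ut)
        + en (xt - fdyn f0 B xt ut)) := by
      calc Lv = 2 / σs * (σs / 2 * Lv) := by field_simp
        _ ≤ 2 / σs * (en (hout h0 D xs us - hout h0 D xt ut)
            + en (xt - fdyn f0 B xt ut)) :=
          mul_le_mul_of_nonneg_left h1 (by positivity)
    calc Lv ≤ 2 / σs * (en (hout h0 D xs us - hout h0 D xt ut)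
        + en (xt - fdyn f0 B xt ut)) := hfinal
      _ ≤ max (2 / σs) (D0 / r) * (en (hout h0 D xs us - hout h0 D xt ut)
          + en (xt - fdyn f0 B xt ut)) :=
        mul_le_mul_of_nonneg_right (le_max_left _ _) hRvnn
  case neg =>
    push_neg at hcase
    have hmemK' : ((xs, us), (xt, ut)) ∈ K' := by
      rw [hK'def]
      exact ⟨⟨hZmem, ⟨hxt, hut⟩⟩, hcase.le⟩
    have hrR0 := hrle _ hmemK'
    rw [hRfdef] at hrR0
    simp only at hrR0
    have hrR : r ≤ en (hout h0 D xs us - hout h0 D xt ut) + en (xt - fdyn f0 B xt ut) :=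
      hrR0
    have h1 : en (xs - xt) ≤ Real.sqrt n * (2 * RX) := by
      refine le_trans (en_le _) ?_
      apply mul_le_mul_of_nonneg_left _ (Real.sqrt_nonneg _)
      have hxs' : ‖xs‖ ≤ RX := mem_closedBall_zero_iff.mp (hRX hxsX)
      have hxt' : ‖xt‖ ≤ RX := mem_closedBall_zero_iff.mp (hRX hxt)
      calc ‖xs - xt‖ ≤ ‖xs‖ + ‖xt‖ := norm_sub_le _ _
        _ ≤ 2 * RX := by linarith
    have h2 : en (us - ut) ≤ Real.sqrt m * (2 * RU) := by
      refine le_trans (en_le _) ?_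
      apply mul_le_mul_of_nonneg_left _ (Real.sqrt_nonneg _)
      have hus' : ‖us‖ ≤ RU := mem_closedBall_zero_iff.mp (hRU husU)
      have hut' : ‖ut‖ ≤ RU := mem_closedBall_zero_iff.mp (hRU hut)
      calc ‖us - ut‖ ≤ ‖us‖ + ‖ut‖ := norm_sub_le _ _
        _ ≤ 2 * RU := by linarith
    have hLD : Real.sqrt (en (xs - xt) ^ 2 + en (us - ut) ^ 2) ≤ D0 := by
      refine le_trans (sqrt_add_sq_le (en_nonneg _) (en_nonneg _)) ?_
      rw [hD0def]; linarith
    have hDr : D0 ≤ D0 / r * (en (hout h0 D xs us - hout h0 D xt ut)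
        + en (xt - fdyn f0 B xt ut)) := by
      have h3 : D0 / r * r ≤ D0 / r * (en (hout h0 D xs us - hout h0 D xt ut)
          + en (xt - fdyn f0 B xt ut)) :=
        mul_le_mul_of_nonneg_left hrR (by positivity)
      rwa [div_mul_cancel₀ _ (ne_of_gt hr0)] at h3
    calc Real.sqrt (en (xs - xt) ^ 2 + en (us - ut) ^ 2) ≤ D0 := hLD
      _ ≤ D0 / r * (en (hout h0 D xs us - hout h0 D xt ut)
          + en (xt - fdyn f0 B xt ut)) := hDr
      _ ≤ max (2 / σs) (D0 / r) * (en (hout h0 D xs us - hout h0 D xt ut)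
          + en (xt - fdyn f0 B xt ut)) :=
        mul_le_mul_of_nonneg_right (le_max_right _ _) hRvnn
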